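/- arXiv:math/0504470 — 3 statements merged into one kernel-verified Lean document; each statement's English description precedes it below -/
import Mathlib

section
/- Let f(X_1,…,X_p) be a multilinear polynomial in noncommuting variables over ℂ (a linear combination of monomials X_{σ(1)}⋯X_{σ(p)}, σ ∈ S_p). If f(A_1,…,A_p) = 0 for all Hermitian matrices A_1,…,A_p ∈ M_{p+1}(ℂ), then all coefficients of f are zero. -/
open Matrix

lemma aux_prod_ofFn_eq_zero {R : Type*} [MonoidWithZero R] {m : ℕ} (f : Fin m → R)
    (k : ℕ) (hk : k + 1 < m) (hz : f ⟨k, by omega⟩ * f ⟨k + 1, hk⟩ = 0) :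
    (List.ofFn f).prod = 0 := by
  have hlen : (List.ofFn f).length = m := List.length_ofFn
  have h1 : (List.ofFn f).drop k
      = f ⟨k, by omega⟩ :: f ⟨k + 1, hk⟩ :: (List.ofFn f).drop (k + 2) := by
    rw [List.drop_eq_getElem_cons (by omega), List.drop_eq_getElem_cons (by omega)]
    simp
  calc (List.ofFn f).prod
      = ((List.ofFn f).take k).prod * ((List.ofFn f).drop k).prod :=
        (List.prod_take_mul_prod_drop _ k).symm
    _ = 0 := by
        rw [h1]
        simp only [List.prod_cons, ← mul_assoc, hz, zero_mul, mul_zero]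

lemma aux_chain' {n : ℕ} : ∀ (m : ℕ) (c : Fin (m + 1) → Fin n) (x : Fin n),
    Matrix.single x (c 0) (1 : ℂ) *
      (List.ofFn fun i : Fin m => Matrix.single (c i.castSucc) (c i.succ) (1 : ℂ)).prod
    = Matrix.single x (c (Fin.last m)) 1 := by
  intro m
  induction m with
  | zero => intro c x; simp
  | succ m ih =>
    intro c x
    rw [List.ofFn_succ]
    simp only [List.prod_cons, ← mul_assoc]
    rw [show (0 : Fin (m + 1)).castSucc = 0 from rfl, Matrix.single_mul_single_same, one_mul]
    have := ih (fun j => c j.succ) x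
    simp only [Fin.succ_castSucc] at this ⊢
    rw [Fin.succ_last] at this
    exact this

lemma aux_chain {n m : ℕ} (c : Fin (m + 2) → Fin n) :
    (List.ofFn fun i : Fin (m + 1) => Matrix.single (c i.castSucc) (c i.succ) (1 : ℂ)).prod
      = Matrix.single (c 0) (c (Fin.last (m + 1))) 1 := by
  rw [List.ofFn_succ]
  simp only [List.prod_cons]
  have := aux_chain' m (fun j => c j.succ) (c 0)
  simp only [Fin.succ_castSucc, Fin.succ_last] at this
  simpa [Fin.castSucc_zero] using this

lemma aux_perm_eq_one {p : ℕ} (π : Equiv.Perm (Fin p))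
    (hc : ∀ (k : ℕ) (hk : k + 1 < p),
      ((π ⟨k + 1, hk⟩ : Fin p) : ℕ) = (π ⟨k, by omega⟩ : Fin p) + 1) :
    π = 1 := by
  rcases Nat.eq_zero_or_pos p with hp | hp
  · subst hp; exact Subsingleton.elim _ _
  have key : ∀ (k : ℕ) (hk : k < p), ((π ⟨k, hk⟩ : Fin p) : ℕ) = (π ⟨0, hp⟩ : Fin p) + k := by
    intro k
    induction k with
    | zero => intro hk; simp
    | succ k ih => intro hk; rw [hc k hk, ih (by omega)]; omega
  have hq : p - 1 < p := by omega
  have hlt : ((π ⟨p - 1, hq⟩ : Fin p) : ℕ) < p := (π _).isLt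
  have hkey := key (p - 1) hq
  have h0 : ((π ⟨0, hp⟩ : Fin p) : ℕ) = 0 := by omega
  ext i
  simp only [Equiv.Perm.coe_one, id_eq]
  have hv := key i.val i.isLt
  have h2 : π i = π ⟨i.val, i.isLt⟩ := by congr 1
  rw [h2]
  omega

lemma aux_decomp {n : ℕ} (B : Matrix (Fin n) (Fin n) ℂ) :
    ∃ H K : Matrix (Fin n) (Fin n) ℂ, H.IsHermitian ∧ K.IsHermitian ∧
      B = H + Complex.I • K := by
  refine ⟨(1 / 2 : ℂ) • (B + Bᴴ), (-(Complex.I) / 2) • (B - Bᴴ), ?_, ?_, ?_⟩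
  · show _ᴴ = _
    ext i j
    simp only [Matrix.conjTranspose_apply, Matrix.smul_apply, Matrix.add_apply,
      smul_eq_mul, star_mul', star_add, star_star]
    rw [show star (1 / 2 : ℂ) = 1 / 2 by simp]
    ring
  · show _ᴴ = _
    ext i j
    simp only [Matrix.conjTranspose_apply, Matrix.smul_apply, Matrix.sub_apply,
      smul_eq_mul, star_mul', star_sub, star_star]
    rw [show star (-(Complex.I) / 2 : ℂ) = Complex.I / 2 by simp [Complex.ext_iff]]
    ring
  · ext i j
    simp only [Matrix.add_apply, Matrix.smul_apply, Matrix.sub_apply,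
      Matrix.conjTranspose_apply, smul_eq_mul]
    linear_combination (B i j - star (B j i)) / 2 * Complex.I_sq

/-- If a multilinear polynomial `f(X₁,…,X_p) = Σ_{σ ∈ S_p} c_σ X_{σ(1)}⋯X_{σ(p)}` in
noncommuting variables vanishes on all Hermitian matrices in `M_{p+1}(ℂ)`, then all its
coefficients are zero. -/
theorem stmt2 (p : ℕ) (c : Equiv.Perm (Fin p) → ℂ)
    (h : ∀ A : Fin p → Matrix (Fin (p + 1)) (Fin (p + 1)) ℂ,
      (∀ j, (A j).IsHermitian) →
      ∑ σ : Equiv.Perm (Fin p), c σ • (List.ofFn fun i => A (σ i)).prod = 0) :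
    ∀ σ : Equiv.Perm (Fin p), c σ = 0 := by
  classical
  let M := Matrix (Fin (p + 1)) (Fin (p + 1)) ℂ
  let F : MultilinearMap ℂ (fun _ : Fin p => M) M :=
    ∑ σ : Equiv.Perm (Fin p), c σ • (MultilinearMap.mkPiAlgebraFin ℂ p M).domDomCongr σ
  have hF : ∀ A : Fin p → M, F A = ∑ σ : Equiv.Perm (Fin p),
      c σ • (List.ofFn fun i => A (σ i)).prod := by
    intro A
    simp only [F, MultilinearMap.sum_apply, MultilinearMap.smul_apply,
      MultilinearMap.domDomCongr_apply, MultilinearMap.mkPiAlgebraFin_apply]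
  have hFh : ∀ A : Fin p → M, (∀ j, (A j).IsHermitian) → F A = 0 :=
    fun A hA => (hF A).trans (h A hA)
  -- extension to all matrices by multilinearity
  have hall : ∀ A : Fin p → M, F A = 0 := by
    intro A
    choose H K h1 h2 h3 using fun j => aux_decomp (A j)
    rw [show A = H + (fun j => Complex.I • K j) from funext h3, F.map_add_univ]
    apply Finset.sum_eq_zero
    intro s _
    have hpc : (s.piecewise H fun j => Complex.I • K j)
        = fun j => (if j ∈ s then (1 : ℂ) else Complex.I) • s.piecewise H K j := by
      funext j
      by_cases hj : j ∈ s <;> simp [Finset.piecewise, hj]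
    rw [hpc, F.map_smul_univ, hFh (s.piecewise H K) (fun j => by
      by_cases hj : j ∈ s <;> simp [Finset.piecewise, hj, h1 j, h2 j]), smul_zero]
  -- plug in standard basis matrices
  intro σ
  set A : Fin p → M :=
    fun j => Matrix.single (σ⁻¹ j).castSucc (σ⁻¹ j).succ (1 : ℂ) with hAdef
  have key : ∀ τ : Equiv.Perm (Fin p), (List.ofFn fun i => A (τ i)).prod
      = if τ = σ then Matrix.single 0 (Fin.last p) (1 : ℂ) else 0 := by
    intro τ
    by_cases hτ : τ = σ
    · subst hτ
      rw [if_pos rfl]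
      have hfun : ∀ i : Fin p, A (τ i) = Matrix.single i.castSucc i.succ (1 : ℂ) := by
        intro i; simp only [hAdef]; simp
      rcases p with _ | m
      · simp only [List.ofFn_zero, List.prod_nil]
        ext x y
        have hx : x = 0 := Fin.ext (by omega)
        have hy : y = 0 := Fin.ext (by omega)
        subst hx; subst hy
        rw [show (Fin.last 0) = 0 from rfl, Matrix.single_apply_same]
        show (1 : Matrix (Fin (0 + 1)) (Fin (0 + 1)) ℂ) 0 0 = 1
        simp [Matrix.one_apply]
      · rw [show (List.ofFn fun i => A (τ i))
            = List.ofFn fun i : Fin (m + 1) => Matrix.single i.castSucc i.succ (1 : ℂ) from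
          congrArg List.ofFn (funext hfun)]
        have hch := aux_chain (m := m) (fun j : Fin (m + 2) => j)
        simpa using hch
    · rw [if_neg hτ]
      set π : Equiv.Perm (Fin p) := σ⁻¹ * τ with hπ
      have hπ1 : π ≠ 1 := by
        intro hcon
        rw [hπ, inv_mul_eq_one] at hcon
        exact hτ hcon.symm
      have hbreak : ∃ (k : ℕ) (hk : k + 1 < p),
          ((π ⟨k + 1, hk⟩ : Fin p) : ℕ) ≠ (π ⟨k, by omega⟩ : Fin p) + 1 := by
        by_contra hcon
        push_neg at hcon
        exact hπ1 (aux_perm_eq_one π hcon)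
      obtain ⟨k, hk, hne⟩ := hbreak
      have hfun : ∀ i : Fin p, A (τ i)
          = Matrix.single (π i).castSucc (π i).succ (1 : ℂ) := by
        intro i; simp only [hAdef, hπ, Equiv.Perm.coe_mul, Function.comp_apply]
      rw [show (List.ofFn fun i => A (τ i))
          = List.ofFn fun i : Fin p => Matrix.single (π i).castSucc (π i).succ (1 : ℂ) from
        congrArg List.ofFn (funext hfun)]
      apply aux_prod_ofFn_eq_zero _ k hk
      apply Matrix.single_mul_single_of_ne
      intro hcon
      apply hne
      have := congrArg Fin.val hcon
      simp only [Fin.val_succ, Fin.coe_castSucc] at this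
      omega
  have h0 := hall A
  rw [hF] at h0
  simp only [key, smul_ite, smul_zero] at h0
  rw [Finset.sum_ite_eq' Finset.univ σ
    (fun τ => c τ • Matrix.single 0 (Fin.last p) (1 : ℂ)),
    if_pos (Finset.mem_univ σ)] at h0
  have h2 := congrFun (congrFun h0 0) (Fin.last p)
  simp [Matrix.smul_apply, Matrix.single_apply_same] at h2
  exact h2
end

section
/- Let (A, φ) be a *-noncommutative probability space and x_1,…,x_n self-adjoint elements. Suppose that for every m ∈ ℕ and all self-adjoint A_1,…,A_n ∈ M_m(ℂ), the scalar-extended cumulants satisfy Σ_{(j_0,…,j_p)} A_{j_0} A_{j_1} ⋯ A_{j_p} · k^{(p+1)}(x_{j_0} ⊗ ⋯ ⊗ x_{j_p}) = 0 for all p ≠ 1. Then k^{(p+1)}(x_{j_0} ⊗ ⋯ ⊗ x_{j_p}) = 0 for all p ≠ 1 and all index tuples, i.e. x_1,…,x_n form a semicircular family. -/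
open scoped Classical

noncomputable section

/-- A partition of `Fin n` given as a finset of blocks. -/
def IsPartition {n : ℕ} (π : Finset (Finset (Fin n))) : Prop :=
  (∀ B ∈ π, B.Nonempty) ∧ ∀ i : Fin n, ∃! B : Finset (Fin n), B ∈ π ∧ i ∈ B

/-- The crossing condition: `a < b < c < d` with `a, c` in one block and `b, d` in another. -/
def Crossing {n : ℕ} (π : Finset (Finset (Fin n))) : Prop :=
  ∃ B₁ ∈ π, ∃ B₂ ∈ π, B₁ ≠ B₂ ∧ ∃ a ∈ B₁, ∃ b ∈ B₂, ∃ c ∈ B₁, ∃ d ∈ B₂,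
    a < b ∧ b < c ∧ c < d

/-- Noncrossing partitions. -/
def IsNC {n : ℕ} (π : Finset (Finset (Fin n))) : Prop := IsPartition π ∧ ¬ Crossing π

/-- The finset of noncrossing partitions of `{1, …, n}`. -/
def NC (n : ℕ) : Finset (Finset (Finset (Fin n))) := Finset.univ.filter IsNC

/-- The finset of noncrossing pair partitions of `{1, …, n}`. -/
def NCPP (n : ℕ) : Finset (Finset (Finset (Fin n))) :=
  (NC n).filter fun π => ∀ B ∈ π, B.card = 2

/-- `k_π[a₁ ⊗ ⋯ ⊗ aₙ]`: the product over the blocks of `π` of the cumulant functionals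
applied to the entries of the block (in increasing order). -/
def cumPart {A : Type*} {n : ℕ} (k : ∀ m : ℕ, (Fin m → A) → ℂ)
    (π : Finset (Finset (Fin n))) (a : Fin n → A) : ℂ :=
  ∏ B ∈ π, k B.card fun i => a ((B.orderIsoOfFin rfl i : Fin n))

/-- The moment–cumulant relation: `φ(a₁⋯aₙ) = Σ_{π ∈ NC(n)} k_π[a₁ ⊗ ⋯ ⊗ aₙ]`,
defining the free cumulants `k` of `φ`. -/
def MomentCumulant {A : Type*} [Ring A] (φ : A → ℂ) (k : ∀ m : ℕ, (Fin m → A) → ℂ) : Prop :=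
  ∀ (n : ℕ), 0 < n → ∀ a : Fin n → A,
    φ (List.ofFn a).prod = ∑ π ∈ NC n, cumPart k π a

/-- The product over the pairs `(k, l)`, `k < l`, of a pair partition `γ` of `f k l`. -/
def pairProd {n : ℕ} (f : Fin n → Fin n → ℂ) (γ : Finset (Finset (Fin n))) : ℂ :=
  ∏ B ∈ γ, if h : B.Nonempty then f (B.min' h) (B.max' h) else 1

end

noncomputable def Mmat (p : ℕ) {n : ℕ} (J : ℕ → Fin n) (l : Fin n) :
    Matrix (Fin (p + 2)) (Fin (p + 2)) ℂ :=
  Matrix.of fun a b =>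
    if (a.val + 1 = b.val ∧ J a.val = l) ∨ (b.val + 1 = a.val ∧ J b.val = l) then 1 else 0

lemma Mmat_herm (p : ℕ) {n : ℕ} (J : ℕ → Fin n) (l : Fin n) : (Mmat p J l).IsHermitian := by
  unfold Matrix.IsHermitian
  ext a b
  simp only [Matrix.conjTranspose_apply, Mmat, Matrix.of_apply]
  split_ifs with h1 h2 h3
  · exact star_one ℂ
  · exact absurd (Or.symm h1) h2
  · exact absurd (Or.symm h3) h1
  · exact star_zero ℂ

lemma Mmat_prod_aux (p : ℕ) {n : ℕ} (J J' : ℕ → Fin n) :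
    ∀ r, r ≤ p + 1 → ∀ b : Fin (p + 2), r ≤ b.val →
      (List.ofFn fun i : Fin r => Mmat p J (J' i.val)).prod 0 b
        = if b.val = r ∧ ∀ i < r, J' i = J i then 1 else 0 := by
  intro r
  induction r with
  | zero =>
    intro _ b _
    simp only [List.ofFn_zero, List.prod_nil, Matrix.one_apply]
    by_cases hb : b.val = 0
    · have h0 : (0 : Fin (p + 2)) = b := by
        apply Fin.ext; simp [hb]
      simp [h0, hb]
    · have h0 : (0 : Fin (p + 2)) ≠ b := fun h => hb (by simp [← h])
      simp [h0, hb]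
  | succ r ih =>
    intro hr b hb
    have hr' : r ≤ p + 1 := Nat.le_of_succ_le hr
    have hrlt : r < p + 2 := by omega
    rw [List.ofFn_succ', List.prod_concat, Matrix.mul_apply]
    have hlist : (List.ofFn fun i : Fin r => Mmat p J (J' (Fin.castSucc i).val))
        = List.ofFn fun i : Fin r => Mmat p J (J' i.val) := rfl
    rw [hlist]
    rw [Finset.sum_eq_single_of_mem (⟨r, hrlt⟩ : Fin (p + 2)) (Finset.mem_univ _) ?side]
    case side =>
      intro c _ hc
      have hcv : c.val ≠ r := fun he => hc (Fin.ext he)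
      by_cases h : r ≤ c.val
      · rw [ih hr' c h, if_neg (by omega)]
        exact zero_mul _
      · have hM : Mmat p J (J' (Fin.last r).val) c b = 0 := by
          simp only [Mmat, Matrix.of_apply]
          rw [if_neg]
          rintro (⟨h1, _⟩ | ⟨h1, _⟩) <;> omega
        rw [hM, mul_zero]
    · rw [ih hr' ⟨r, hrlt⟩ le_rfl]
      have hM : Mmat p J (J' (Fin.last r).val) ⟨r, hrlt⟩ b
          = if b.val = r + 1 ∧ J' r = J r then 1 else 0 := by
        simp only [Mmat, Matrix.of_apply, Fin.val_last]
        apply if_congr _ rfl rfl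
        constructor
        · rintro (⟨h1, h2⟩ | ⟨h1, h2⟩)
          · exact ⟨h1.symm, h2.symm⟩
          · omega
        · rintro ⟨h1, h2⟩
          exact Or.inl ⟨h1.symm, h2.symm⟩
      rw [hM]
      have hiff : (((⟨r, hrlt⟩ : Fin (p + 2)).val = r ∧ ∀ i < r, J' i = J i)
          ∧ (b.val = r + 1 ∧ J' r = J r)) ↔ (b.val = r + 1 ∧ ∀ i < r + 1, J' i = J i) := by
        constructor
        · rintro ⟨⟨-, h1⟩, h2, h3⟩
          refine ⟨h2, fun i hi => ?_⟩
          rcases Nat.lt_succ_iff_lt_or_eq.mp hi with h | h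
          · exact h1 i h
          · subst h; exact h3
        · rintro ⟨h1, h2⟩
          exact ⟨⟨rfl, fun i hi => h2 i (Nat.lt_succ_of_lt hi)⟩, h1,
            h2 r (Nat.lt_succ_self r)⟩
      by_cases hR : (b : ℕ) = r + 1 ∧ ∀ i < r + 1, J' i = J i
      · obtain ⟨hP, hQ⟩ := hiff.mpr hR
        rw [if_pos hP, if_pos hQ, if_pos hR, one_mul]
      · rw [if_neg hR]
        by_cases hP : ((⟨r, hrlt⟩ : Fin (p + 2)) : ℕ) = r ∧ ∀ i < r, J' i = J i
        · by_cases hQ : (b : ℕ) = r + 1 ∧ J' r = J r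
          · exact absurd (hiff.mp ⟨hP, hQ⟩) hR
          · rw [if_neg hQ, mul_zero]
        · rw [if_neg hP, zero_mul]

/-- If for every `m` and all self-adjoint `A₁,…,Aₙ ∈ M_m(ℂ)` the scalar-extended
cumulants `Σ_{(j₀,…,j_p)} k⁽ᵖ⁺¹⁾(x_{j₀} ⊗ ⋯ ⊗ x_{j_p}) · A_{j₀}A_{j₁}⋯A_{j_p}` vanish
for all `p ≠ 1`, then all joint cumulants of order `≠ 2` of `x₁,…,xₙ` vanish, i.e. the
family is semicircular. -/
theorem stmt9 {A : Type*} [Ring A] [StarRing A] [Algebra ℂ A]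
    (φ : A →ₗ[ℂ] ℂ) (hφ1 : φ 1 = 1)
    (k : ∀ q : ℕ, (Fin q → A) → ℂ) (hk : MomentCumulant φ k)
    (n : ℕ) (x : Fin n → A) (hsa : ∀ j, star (x j) = x j)
    (hyp : ∀ (m : ℕ) (Am : Fin n → Matrix (Fin m) (Fin m) ℂ),
      (∀ j, (Am j).IsHermitian) →
      ∀ p : ℕ, p ≠ 1 →
        ∑ j : Fin (p + 1) → Fin n,
          k (p + 1) (fun i => x (j i)) • (List.ofFn fun i => Am (j i)).prod = 0) :
    ∀ p : ℕ, p ≠ 1 → ∀ j : Fin (p + 1) → Fin n, k (p + 1) (fun i => x (j i)) = 0 := by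
  intro p hp j
  set J : ℕ → Fin n := fun i => if h : i < p + 1 then j ⟨i, h⟩ else j ⟨0, p.succ_pos⟩ with hJ
  have hJval : ∀ i : Fin (p + 1), J i.val = j i := by
    intro i
    simp only [hJ, dif_pos i.isLt, Fin.eta]
  have hmat := hyp (p + 2) (fun l => Mmat p J l) (fun l => Mmat_herm p J l) p hp
  have hentry : (∑ j' : Fin (p + 1) → Fin n,
      k (p + 1) (fun i => x (j' i)) • (List.ofFn fun i => Mmat p J (j' i)).prod)
        0 (Fin.last (p + 1)) = 0 := by
    rw [hmat]; rfl
  rw [Matrix.sum_apply] at hentry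
  have hE : ∀ j' : Fin (p + 1) → Fin n,
      (List.ofFn fun i : Fin (p + 1) => Mmat p J (j' i)).prod 0 (Fin.last (p + 1))
        = if j' = j then 1 else 0 := by
    intro j'
    set J' : ℕ → Fin n := fun i => if h : i < p + 1 then j' ⟨i, h⟩ else j' ⟨0, p.succ_pos⟩
      with hJ'
    have hJ'val : ∀ i : Fin (p + 1), J' i.val = j' i := by
      intro i
      simp only [hJ', dif_pos i.isLt, Fin.eta]
    have hlist : (List.ofFn fun i : Fin (p + 1) => Mmat p J (j' i))
        = List.ofFn fun i : Fin (p + 1) => Mmat p J (J' i.val) := by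
      congr 1
      funext i
      rw [hJ'val]
    rw [hlist, Mmat_prod_aux p J J' (p + 1) le_rfl (Fin.last (p + 1)) (by simp)]
    apply if_congr _ rfl rfl
    constructor
    · rintro ⟨-, h⟩
      funext i
      have := h i.val i.isLt
      rwa [hJ'val, hJval] at this
    · rintro rfl
      exact ⟨by simp, fun i hi => rfl⟩
  have hsum : ∀ j' : Fin (p + 1) → Fin n,
      (k (p + 1) (fun i => x (j' i)) • (List.ofFn fun i => Mmat p J (j' i)).prod)
        0 (Fin.last (p + 1))
      = k (p + 1) (fun i => x (j' i)) * (if j' = j then 1 else 0) := by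
    intro j'
    rw [Matrix.smul_apply, hE j', smul_eq_mul]
  rw [Finset.sum_congr rfl (fun j' _ => hsum j')] at hentry
  rw [Finset.sum_eq_single_of_mem j (Finset.mem_univ j)
    (fun j' _ hj' => by rw [if_neg hj', mul_zero])] at hentry
  rwa [if_pos rfl, mul_one] at hentry
end

section
/- Let H be a complex Hilbert space, F(H) the full Fock space with vacuum state τ = ⟨Ω, ·Ω⟩, and G_0(f) = a(f) + a*(f). Then for any f_1,…,f_p ∈ H, τ(G_0(f_1)⋯G_0(f_p)) = Σ_{γ ∈ NCPP(p)} ∏_{(k,l) ∈ γ} ⟨f_k, f_l⟩, the sum over noncrossing pair partitions of {1,…,p}. In particular the moment vanishes when p is odd. -/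
open scoped Classical

noncomputable section Comb

open Finset

lemma mem_NCPP {n : ℕ} (π : Finset (Finset (Fin n))) :
    π ∈ NCPP n ↔ (IsPartition π ∧ ¬ Crossing π) ∧ ∀ B ∈ π, B.card = 2 := by
  simp [NCPP, NC, IsNC, Finset.mem_filter]

lemma NCPP_zero : NCPP 0 = {∅} := by
  ext π
  rw [mem_NCPP, Finset.mem_singleton]
  constructor
  · rintro ⟨⟨⟨hne, _⟩, _⟩, _⟩
    ext B
    simp only [Finset.notMem_empty, iff_false]
    intro hB
    obtain ⟨x, _⟩ := hne B hB
    exact x.elim0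
  · rintro rfl
    refine ⟨⟨⟨fun B hB => absurd hB (Finset.notMem_empty B), fun i => i.elim0⟩, ?_⟩, ?_⟩
    · rintro ⟨B₁, hB₁, -⟩
      exact absurd hB₁ (Finset.notMem_empty B₁)
    · intro B hB; exact absurd hB (Finset.notMem_empty B)

lemma pairProd_empty {n : ℕ} (f : Fin n → Fin n → ℂ) : pairProd f (∅ : Finset (Finset (Fin n))) = 1 := by
  simp [pairProd]

/-- order-embedding of `Fin m` into `Fin n` starting at `a`. -/
def emb {n : ℕ} (a m : ℕ) (h : a + m ≤ n) : Fin m → Fin n :=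
  fun i => ⟨a + i.1, by have := i.isLt; omega⟩

lemma emb_val {n : ℕ} (a m : ℕ) (h : a + m ≤ n) (i : Fin m) : (emb a m h i).1 = a + i.1 := rfl

lemma emb_inj {n : ℕ} (a m : ℕ) (h : a + m ≤ n) : Function.Injective (emb a m h) := by
  intro i j hij
  have : a + i.1 = a + j.1 := congrArg Fin.val hij
  exact Fin.ext (by omega)

lemma emb_lt_iff {n : ℕ} (a m : ℕ) (h : a + m ≤ n) (i j : Fin m) :
    emb a m h i < emb a m h j ↔ i < j := by
  simp only [emb, Fin.mk_lt_mk, Fin.lt_def]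
  omega

lemma emb_mono {n : ℕ} (a m : ℕ) (h : a + m ≤ n) : Monotone (emb a m h) := by
  intro i j hij
  simp only [emb, Fin.mk_le_mk, Fin.le_def] at *
  omega

/-- blocks whose elements live in `[a, a+m)` -/
def regP {n : ℕ} (a m : ℕ) (B : Finset (Fin n)) : Prop := ∀ x ∈ B, a ≤ x.1 ∧ x.1 < a + m

def mapP {n : ℕ} (a m : ℕ) (h : a + m ≤ n) (π : Finset (Finset (Fin m))) : Finset (Finset (Fin n)) :=
  π.image fun B => B.image (emb a m h)

def pullP {n : ℕ} (a m : ℕ) (h : a + m ≤ n) (γ : Finset (Finset (Fin n))) : Finset (Finset (Fin m)) :=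
  (γ.filter (regP a m)).image fun B => B.preimage (emb a m h) ((emb_inj a m h).injOn)

lemma preimage_image_emb {n : ℕ} (a m : ℕ) (h : a + m ≤ n) (B : Finset (Fin m)) :
    (B.image (emb a m h)).preimage (emb a m h) ((emb_inj a m h).injOn) = B := by
  ext x
  simp only [Finset.mem_preimage, Finset.mem_image]
  constructor
  · rintro ⟨y, hy, hxy⟩
    rwa [← emb_inj a m h hxy]
  · intro hx; exact ⟨x, hx, rfl⟩

lemma image_preimage_emb {n : ℕ} (a m : ℕ) (h : a + m ≤ n) (B : Finset (Fin n))
    (hB : regP a m B) :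
    (B.preimage (emb a m h) ((emb_inj a m h).injOn)).image (emb a m h) = B := by
  ext x
  simp only [Finset.mem_image, Finset.mem_preimage]
  constructor
  · rintro ⟨y, hy, rfl⟩; exact hy
  · intro hx
    obtain ⟨ha, hb⟩ := hB x hx
    refine ⟨⟨x.1 - a, by omega⟩, ?_, ?_⟩
    · convert hx using 1
      exact Fin.ext (by simp [emb_val]; omega)
    · exact Fin.ext (by simp [emb_val]; omega)

lemma mapP_regP {n : ℕ} (a m : ℕ) (h : a + m ≤ n) (π : Finset (Finset (Fin m)))
    (B : Finset (Fin n)) (hB : B ∈ mapP a m h π) : regP a m B := by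
  obtain ⟨C, _, rfl⟩ := Finset.mem_image.1 hB
  intro x hx
  obtain ⟨y, _, rfl⟩ := Finset.mem_image.1 hx
  have := y.isLt
  simp only [emb_val]
  omega

lemma mapP_card {n : ℕ} (a m : ℕ) (h : a + m ≤ n) (π : Finset (Finset (Fin m)))
    (hπ : ∀ C ∈ π, C.card = 2) (B : Finset (Fin n)) (hB : B ∈ mapP a m h π) : B.card = 2 := by
  obtain ⟨C, hC, rfl⟩ := Finset.mem_image.1 hB
  rw [Finset.card_image_of_injective _ (emb_inj a m h)]
  exact hπ C hC

-- continuation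
lemma mapP_exists_unique {n : ℕ} (a m : ℕ) (h : a + m ≤ n) (π : Finset (Finset (Fin m)))
    (hπ : IsPartition π) (x : Fin n) (hx1 : a ≤ x.1) (hx2 : x.1 < a + m) :
    ∃! B, B ∈ mapP a m h π ∧ x ∈ B := by
  set x' : Fin m := ⟨x.1 - a, by omega⟩ with hx'
  have hxx : emb a m h x' = x := Fin.ext (by simp [emb_val, hx']; omega)
  obtain ⟨B, ⟨hBmem, hBx⟩, hBuniq⟩ := hπ.2 x'
  refine ⟨B.image (emb a m h), ⟨Finset.mem_image_of_mem _ hBmem, ?_⟩, ?_⟩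
  · rw [← hxx]; exact Finset.mem_image_of_mem _ hBx
  · rintro C ⟨hCmem, hCx⟩
    obtain ⟨C', hC'mem, rfl⟩ := Finset.mem_image.1 hCmem
    obtain ⟨y, hy, hyx⟩ := Finset.mem_image.1 hCx
    have : y = x' := emb_inj a m h (by rw [hyx, hxx])
    subst this
    rw [hBuniq C' ⟨hC'mem, hy⟩]

lemma mapP_nocross {n : ℕ} (a m : ℕ) (h : a + m ≤ n) (π : Finset (Finset (Fin m)))
    (hπ : ¬ Crossing π) (B₁ B₂ : Finset (Fin n)) (h₁ : B₁ ∈ mapP a m h π) (h₂ : B₂ ∈ mapP a m h π)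
    (hne : B₁ ≠ B₂) (x₁ x₂ x₃ x₄ : Fin n) (m₁ : x₁ ∈ B₁) (m₂ : x₂ ∈ B₂) (m₃ : x₃ ∈ B₁)
    (m₄ : x₄ ∈ B₂) (o₁ : x₁ < x₂) (o₂ : x₂ < x₃) (o₃ : x₃ < x₄) : False := by
  obtain ⟨C₁, hC₁, rfl⟩ := Finset.mem_image.1 h₁
  obtain ⟨C₂, hC₂, rfl⟩ := Finset.mem_image.1 h₂
  obtain ⟨y₁, hy₁, rfl⟩ := Finset.mem_image.1 m₁
  obtain ⟨y₂, hy₂, rfl⟩ := Finset.mem_image.1 m₂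
  obtain ⟨y₃, hy₃, rfl⟩ := Finset.mem_image.1 m₃
  obtain ⟨y₄, hy₄, rfl⟩ := Finset.mem_image.1 m₄
  refine hπ ⟨C₁, hC₁, C₂, hC₂, ?_, y₁, hy₁, y₂, hy₂, y₃, hy₃, y₄, hy₄,
    (emb_lt_iff a m h _ _).1 o₁, (emb_lt_iff a m h _ _).1 o₂, (emb_lt_iff a m h _ _).1 o₃⟩
  rintro rfl; exact hne rfl

lemma pullP_mem_NCPP {n : ℕ} (a m : ℕ) (h : a + m ≤ n) (γ : Finset (Finset (Fin n)))
    (hγ : γ ∈ NCPP n)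
    (hreg : ∀ B ∈ γ, ∀ x ∈ B, a ≤ x.1 → x.1 < a + m → regP a m B) :
    pullP a m h γ ∈ NCPP m := by
  obtain ⟨⟨⟨hne, huniq⟩, hnc⟩, hcard⟩ := (mem_NCPP γ).1 hγ
  have hcard' : ∀ C ∈ pullP a m h γ, C.card = 2 := by
    intro C hC
    obtain ⟨B, hB, rfl⟩ := Finset.mem_image.1 hC
    rw [Finset.mem_filter] at hB
    have := image_preimage_emb a m h B hB.2
    calc (B.preimage (emb a m h) ((emb_inj a m h).injOn)).card
        = ((B.preimage (emb a m h) ((emb_inj a m h).injOn)).image (emb a m h)).card := by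
          rw [Finset.card_image_of_injective _ (emb_inj a m h)]
      _ = B.card := by rw [this]
      _ = 2 := hcard B hB.1
  rw [mem_NCPP]
  refine ⟨⟨⟨fun C hC => Finset.card_pos.1 (by rw [hcard' C hC]; norm_num), ?_⟩, ?_⟩, hcard'⟩
  · -- unique block through i
    intro i
    have hi1 : a ≤ (emb a m h i).1 := by simp [emb_val]
    have hi2 : (emb a m h i).1 < a + m := by have := i.isLt; simp only [emb_val]; omega
    obtain ⟨B, ⟨hBmem, hBx⟩, hBuniq⟩ := huniq (emb a m h i)
    have hBreg : regP a m B := hreg B hBmem _ hBx hi1 hi2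
    refine ⟨B.preimage (emb a m h) ((emb_inj a m h).injOn),
      ⟨Finset.mem_image_of_mem _ (Finset.mem_filter.2 ⟨hBmem, hBreg⟩), Finset.mem_preimage.2 hBx⟩, ?_⟩
    rintro C ⟨hCmem, hCx⟩
    obtain ⟨B', hB', rfl⟩ := Finset.mem_image.1 hCmem
    rw [Finset.mem_filter] at hB'
    have : B' = B := hBuniq B' ⟨hB'.1, Finset.mem_preimage.1 hCx⟩
    rw [this]
  · -- noncrossing
    rintro ⟨C₁, hC₁, C₂, hC₂, hCne, p₁, hp₁, p₂, hp₂, p₃, hp₃, p₄, hp₄, o₁, o₂, o₃⟩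
    obtain ⟨B₁, hB₁, rfl⟩ := Finset.mem_image.1 hC₁
    obtain ⟨B₂, hB₂, rfl⟩ := Finset.mem_image.1 hC₂
    rw [Finset.mem_filter] at hB₁ hB₂
    have hBne : B₁ ≠ B₂ := by
      rintro rfl; exact hCne rfl
    exact hnc ⟨B₁, hB₁.1, B₂, hB₂.1, hBne,
      emb a m h p₁, Finset.mem_preimage.1 hp₁, emb a m h p₂, Finset.mem_preimage.1 hp₂,
      emb a m h p₃, Finset.mem_preimage.1 hp₃, emb a m h p₄, Finset.mem_preimage.1 hp₄,
      (emb_lt_iff a m h _ _).2 o₁, (emb_lt_iff a m h _ _).2 o₂, (emb_lt_iff a m h _ _).2 o₃⟩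

lemma mapP_pullP {n : ℕ} (a m : ℕ) (h : a + m ≤ n) (γ : Finset (Finset (Fin n))) :
    mapP a m h (pullP a m h γ) = γ.filter (regP a m) := by
  unfold mapP pullP
  rw [Finset.image_image]
  ext B
  simp only [Finset.mem_image, Function.comp_apply]
  constructor
  · rintro ⟨C, hC, rfl⟩
    rwa [image_preimage_emb a m h C (Finset.mem_filter.1 hC).2]
  · intro hB
    exact ⟨B, hB, image_preimage_emb a m h B (Finset.mem_filter.1 hB).2⟩

lemma pullP_mapP {n : ℕ} (a m : ℕ) (h : a + m ≤ n) (π : Finset (Finset (Fin m)))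
    (hfil : (mapP a m h π).filter (regP a m) = mapP a m h π) :
    pullP a m h (mapP a m h π) = π := by
  unfold pullP
  rw [hfil]
  unfold mapP
  rw [Finset.image_image]
  have : ∀ C ∈ π, (Function.comp (fun B => B.preimage (emb a m h) ((emb_inj a m h).injOn))
      (fun B => B.image (emb a m h))) C = C := by
    intro C _
    simp only [Function.comp_apply]
    exact preimage_image_emb a m h C
  rw [Finset.image_congr (fun C hC => this C hC)]
  simp


lemma min'_image_emb {n : ℕ} (a m : ℕ) (h : a + m ≤ n) (B : Finset (Fin m)) (hB : B.Nonempty)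
    (h1 : (B.image (emb a m h)).Nonempty) :
    (B.image (emb a m h)).min' h1 = emb a m h (B.min' hB) := by
  apply le_antisymm
  · exact Finset.min'_le _ _ (Finset.mem_image_of_mem _ (Finset.min'_mem _ _))
  · obtain ⟨y, hy, hyeq⟩ := Finset.mem_image.1 (Finset.min'_mem _ h1)
    rw [← hyeq]
    exact emb_mono a m h (Finset.min'_le _ _ hy)

lemma max'_image_emb {n : ℕ} (a m : ℕ) (h : a + m ≤ n) (B : Finset (Fin m)) (hB : B.Nonempty)
    (h1 : (B.image (emb a m h)).Nonempty) :
    (B.image (emb a m h)).max' h1 = emb a m h (B.max' hB) := by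
  apply le_antisymm
  · obtain ⟨y, hy, hyeq⟩ := Finset.mem_image.1 (Finset.max'_mem _ h1)
    rw [← hyeq]
    exact emb_mono a m h (Finset.le_max' _ _ hy)
  · exact Finset.le_max' _ _ (Finset.mem_image_of_mem _ (Finset.max'_mem _ _))

lemma pairProd_mapP {n : ℕ} (a m : ℕ) (h : a + m ≤ n) (π : Finset (Finset (Fin m)))
    (f : Fin n → Fin n → ℂ) :
    pairProd f (mapP a m h π) = pairProd (fun s t => f (emb a m h s) (emb a m h t)) π := by
  unfold pairProd mapP
  rw [Finset.prod_image]
  · refine Finset.prod_congr rfl fun B _ => ?_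
    by_cases hB : B.Nonempty
    · have h1 : (B.image (emb a m h)).Nonempty := hB.image _
      rw [dif_pos hB, dif_pos h1]
      rw [min'_image_emb a m h B hB h1, max'_image_emb a m h B hB h1]
    · rw [dif_neg hB, dif_neg (by simpa using hB)]
  · intro B _ C _ hBC
    exact Finset.image_injective (emb_inj a m h) hBC

-- classification and stepB
lemma pair_mem_val {n : ℕ} (L : Fin (n+1)) (x : Fin (n+1)) (hx : x ∈ ({0, L} : Finset (Fin (n+1)))) :
    x.1 = 0 ∨ x.1 = L.1 := by
  rcases Finset.mem_insert.1 hx with h | h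
  · left; rw [h]; rfl
  · right; rw [Finset.mem_singleton.1 h]

lemma pair_mem_val_gen {n : ℕ} (z x y : Fin n) (hz : z ∈ ({x, y} : Finset (Fin n))) :
    z = x ∨ z = y := by
  rcases Finset.mem_insert.1 hz with h | h
  · exact Or.inl h
  · exact Or.inr (Finset.mem_singleton.1 h)

lemma classify {n : ℕ} (L : Fin (n+1)) (hL : L ≠ 0) (γ : Finset (Finset (Fin (n+1))))
    (hγ : γ ∈ NCPP (n+1)) (h0 : {0, L} ∈ γ) (B : Finset (Fin (n+1))) (hB : B ∈ γ) :
    B = {0, L} ∨ regP 1 (L.1 - 1) B ∨ regP (L.1 + 1) (n - L.1) B := by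
  obtain ⟨⟨⟨hne, huniq⟩, hnc⟩, hcard⟩ := (mem_NCPP γ).1 hγ
  have hl1 : 1 ≤ L.1 := by
    rcases Nat.eq_zero_or_pos L.1 with h | h
    · exact absurd (Fin.ext h) hL
    · exact h
  have hln : L.1 ≤ n := by have := L.isLt; omega
  by_cases hB0 : B = {0, L}
  · exact Or.inl hB0
  -- B does not contain 0 nor L
  have h0B : (0 : Fin (n+1)) ∉ B := by
    intro hmem
    obtain ⟨C, -, hCu⟩ := huniq 0
    have e1 : B = C := hCu B ⟨hB, hmem⟩
    have e2 : ({0, L} : Finset (Fin (n+1))) = C := hCu _ ⟨h0, Finset.mem_insert_self _ _⟩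
    exact hB0 (e1.trans e2.symm)
  have hLB : L ∉ B := by
    intro hmem
    obtain ⟨C, -, hCu⟩ := huniq L
    have e1 : B = C := hCu B ⟨hB, hmem⟩
    have e2 : ({0, L} : Finset (Fin (n+1))) = C :=
      hCu _ ⟨h0, Finset.mem_insert_of_mem (Finset.mem_singleton_self _)⟩
    exact hB0 (e1.trans e2.symm)
  -- extract the two elements
  obtain ⟨x, y, hxy, hBxy⟩ := Finset.card_eq_two.1 (hcard B hB)
  -- both nonzero and ≠ L
  have hx0 : x.1 ≠ 0 := by
    intro h; apply h0B; rw [hBxy]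
    have : x = 0 := Fin.ext h
    rw [← this]; exact Finset.mem_insert_self _ _
  have hy0 : y.1 ≠ 0 := by
    intro h; apply h0B; rw [hBxy]
    have : y = 0 := Fin.ext h
    rw [← this]; exact Finset.mem_insert_of_mem (Finset.mem_singleton_self _)
  have hxL : x.1 ≠ L.1 := by
    intro h; apply hLB; rw [hBxy]
    have : x = L := Fin.ext h
    rw [← this]; exact Finset.mem_insert_self _ _
  have hyL : y.1 ≠ L.1 := by
    intro h; apply hLB; rw [hBxy]
    have : y = L := Fin.ext h
    rw [← this]; exact Finset.mem_insert_of_mem (Finset.mem_singleton_self _)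
  have hxn : x.1 < n + 1 := x.isLt
  have hyn : y.1 < n + 1 := y.isLt
  -- not one on each side of L
  have hcross : ∀ u v : Fin (n+1), u ∈ B → v ∈ B → u.1 ≠ 0 → u.1 < L.1 → L.1 < v.1 → False := by
    intro u v hu hv hu0 huL hLv
    apply hnc
    refine ⟨{0, L}, h0, B, hB, fun h => hB0 h.symm, 0, Finset.mem_insert_self _ _,
      u, hu, L, Finset.mem_insert_of_mem (Finset.mem_singleton_self _), v, hv, ?_, ?_, ?_⟩
    · rw [Fin.lt_def]; show (0 : ℕ) < u.1; omega
    · rw [Fin.lt_def]; exact huL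
    · rw [Fin.lt_def]; exact hLv
  rcases Nat.lt_or_ge x.1 L.1 with hxlt | hxge
  · rcases Nat.lt_or_ge y.1 L.1 with hylt | hyge
    · refine Or.inr (Or.inl ?_)
      intro z hz
      rw [hBxy] at hz
      rcases pair_mem_val_gen z x y hz with h | h <;> rw [h] <;> omega
    · exact absurd (hcross x y (by rw [hBxy]; exact Finset.mem_insert_self _ _)
        (by rw [hBxy]; exact Finset.mem_insert_of_mem (Finset.mem_singleton_self _)) hx0 hxlt (by omega)) id
  · rcases Nat.lt_or_ge y.1 L.1 with hylt | hyge
    · exact absurd (hcross y x (by rw [hBxy]; exact Finset.mem_insert_of_mem (Finset.mem_singleton_self _))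
        (by rw [hBxy]; exact Finset.mem_insert_self _ _) hy0 hylt (by omega)) id
    · refine Or.inr (Or.inr ?_)
      intro z hz
      rw [hBxy] at hz
      rcases pair_mem_val_gen z x y hz with h | h <;> rw [h] <;> omega

lemma image_pre_mapP {n : ℕ} (a m : ℕ) (h : a + m ≤ n) (π : Finset (Finset (Fin m))) :
    (mapP a m h π).image (fun B => B.preimage (emb a m h) ((emb_inj a m h).injOn)) = π := by
  unfold mapP
  rw [Finset.image_image]
  ext C
  simp only [Finset.mem_image, Function.comp_apply]
  constructor
  · rintro ⟨D, hD, rfl⟩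
    rw [preimage_image_emb a m h D]; exact hD
  · intro hC
    exact ⟨C, hC, preimage_image_emb a m h C⟩

lemma stepB {n : ℕ} (L : Fin (n+1)) (hL : L ≠ 0) (g : ℕ → ℕ → ℂ) :
    ∑ γ ∈ (NCPP (n+1)).filter (fun γ => {0, L} ∈ γ), pairProd (fun s t => g s.1 t.1) γ
      = g 0 L.1 * ((∑ γ ∈ NCPP (L.1 - 1), pairProd (fun s t => g (1 + s.1) (1 + t.1)) γ)
          * ∑ γ ∈ NCPP (n - L.1), pairProd (fun s t => g (L.1 + 1 + s.1) (L.1 + 1 + t.1)) γ) := by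
  classical
  have hl1 : 1 ≤ L.1 := Nat.pos_of_ne_zero (fun h => hL (Fin.ext h))
  have hln : L.1 ≤ n := by have := L.isLt; omega
  have h₁ : 1 + (L.1 - 1) ≤ n + 1 := by omega
  have h₂ : (L.1 + 1) + (n - L.1) ≤ n + 1 := by omega
  have h0L : (0 : Fin (n+1)) ≠ L := fun h => hL h.symm
  set Φ : Finset (Finset (Fin (L.1 - 1))) × Finset (Finset (Fin (n - L.1)))
      → Finset (Finset (Fin (n+1))) :=
    fun q => insert {0, L} (mapP 1 (L.1-1) h₁ q.1 ∪ mapP (L.1+1) (n-L.1) h₂ q.2) with hΦdef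
  set Ψ : Finset (Finset (Fin (n+1)))
      → Finset (Finset (Fin (L.1 - 1))) × Finset (Finset (Fin (n - L.1))) :=
    fun γ => (pullP 1 (L.1-1) h₁ γ, pullP (L.1+1) (n-L.1) h₂ γ) with hΨdef
  -- region bounds
  have hreg1 : ∀ (π : Finset (Finset (Fin (L.1-1)))) B, B ∈ mapP 1 (L.1-1) h₁ π →
      ∀ x ∈ B, 1 ≤ x.1 ∧ x.1 < L.1 := by
    intro π B hB x hx
    have := mapP_regP 1 (L.1-1) h₁ π B hB x hx
    omega
  have hreg2 : ∀ (π : Finset (Finset (Fin (n-L.1)))) B, B ∈ mapP (L.1+1) (n-L.1) h₂ π →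
      ∀ x ∈ B, L.1 + 1 ≤ x.1 := by
    intro π B hB x hx
    exact (mapP_regP (L.1+1) (n-L.1) h₂ π B hB x hx).1
  -- Φ lands in the fiber
  have hΦmem : ∀ q ∈ NCPP (L.1-1) ×ˢ NCPP (n-L.1),
      Φ q ∈ (NCPP (n+1)).filter (fun γ => {0, L} ∈ γ) := by
    rintro ⟨q₁, q₂⟩ hq
    rw [Finset.mem_product] at hq
    obtain ⟨hq₁, hq₂⟩ := hq
    obtain ⟨⟨hpart₁, hnc₁⟩, hcard₁⟩ := (mem_NCPP q₁).1 hq₁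
    obtain ⟨⟨hpart₂, hnc₂⟩, hcard₂⟩ := (mem_NCPP q₂).1 hq₂
    have hcards : ∀ B ∈ Φ (q₁, q₂), B.card = 2 := by
      intro B hB
      rcases Finset.mem_insert.1 hB with rfl | hB'
      · exact Finset.card_pair h0L
      · rcases Finset.mem_union.1 hB' with hB'' | hB''
        · exact mapP_card _ _ _ _ hcard₁ _ hB''
        · exact mapP_card _ _ _ _ hcard₂ _ hB''
    refine Finset.mem_filter.2 ⟨(mem_NCPP _).2 ⟨⟨⟨?_, ?_⟩, ?_⟩, hcards⟩, Finset.mem_insert_self _ _⟩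
    · intro B hB
      exact Finset.card_pos.1 (by rw [hcards B hB]; norm_num)
    · -- unique block through each point
      intro x
      by_cases hx0 : x.1 = 0 ∨ x.1 = L.1
      · have hxmem : x ∈ ({0, L} : Finset (Fin (n+1))) := by
          rcases hx0 with h | h
          · have : x = 0 := Fin.ext h
            rw [this]; exact Finset.mem_insert_self _ _
          · have : x = L := Fin.ext h
            rw [this]; exact Finset.mem_insert_of_mem (Finset.mem_singleton_self _)
        refine ⟨{0, L}, ⟨Finset.mem_insert_self _ _, hxmem⟩, ?_⟩
        rintro C ⟨hC, hxC⟩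
        rcases Finset.mem_insert.1 hC with rfl | hC'
        · rfl
        · exfalso
          rcases Finset.mem_union.1 hC' with hC'' | hC''
          · have := hreg1 q₁ C hC'' x hxC; omega
          · have := hreg2 q₂ C hC'' x hxC; omega
      · push_neg at hx0
        obtain ⟨hxne0, hxnel⟩ := hx0
        rcases Nat.lt_or_ge x.1 L.1 with hxl | hxl
        · obtain ⟨B, ⟨hBm, hBx⟩, hBu⟩ := mapP_exists_unique 1 (L.1-1) h₁ q₁ hpart₁ x
            (by omega) (by omega)
          refine ⟨B, ⟨Finset.mem_insert_of_mem (Finset.mem_union_left _ hBm), hBx⟩, ?_⟩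
          rintro C ⟨hC, hxC⟩
          rcases Finset.mem_insert.1 hC with rfl | hC'
          · exfalso; rcases pair_mem_val L x hxC with h | h <;> omega
          · rcases Finset.mem_union.1 hC' with hC'' | hC''
            · exact hBu C ⟨hC'', hxC⟩
            · exfalso; have := hreg2 q₂ C hC'' x hxC; omega
        · obtain ⟨B, ⟨hBm, hBx⟩, hBu⟩ := mapP_exists_unique (L.1+1) (n-L.1) h₂ q₂ hpart₂ x
            (by omega) (by have := x.isLt; omega)
          refine ⟨B, ⟨Finset.mem_insert_of_mem (Finset.mem_union_right _ hBm), hBx⟩, ?_⟩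
          rintro C ⟨hC, hxC⟩
          rcases Finset.mem_insert.1 hC with rfl | hC'
          · exfalso; rcases pair_mem_val L x hxC with h | h <;> omega
          · rcases Finset.mem_union.1 hC' with hC'' | hC''
            · exfalso; have := hreg1 q₁ C hC'' x hxC; omega
            · exact hBu C ⟨hC'', hxC⟩
    · -- noncrossing
      rintro ⟨B₁, hB₁, B₂, hB₂, hne, a, ha, b, hb, c, hc, d, hd, o₁, o₂, o₃⟩
      have o₁' : a.1 < b.1 := o₁
      have o₂' : b.1 < c.1 := o₂
      have o₃' : c.1 < d.1 := o₃
      rcases Finset.mem_insert.1 hB₁ with rfl | hB₁'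
      · rcases Finset.mem_insert.1 hB₂ with rfl | hB₂'
        · exact hne rfl
        · rcases Finset.mem_union.1 hB₂' with hB₂'' | hB₂''
          · have hbb := hreg1 q₁ B₂ hB₂'' b hb
            have hdd := hreg1 q₁ B₂ hB₂'' d hd
            rcases pair_mem_val L a ha with h | h <;> rcases pair_mem_val L c hc with h' | h' <;> omega
          · have hbb := hreg2 q₂ B₂ hB₂'' b hb
            rcases pair_mem_val L c hc with h' | h' <;> omega
      · rcases Finset.mem_union.1 hB₁' with hB₁'' | hB₁''
        · rcases Finset.mem_insert.1 hB₂ with rfl | hB₂'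
          · have haa := hreg1 q₁ B₁ hB₁'' a ha
            have hcc := hreg1 q₁ B₁ hB₁'' c hc
            rcases pair_mem_val L b hb with h | h <;> rcases pair_mem_val L d hd with h' | h' <;> omega
          · rcases Finset.mem_union.1 hB₂' with hB₂'' | hB₂''
            · exact mapP_nocross 1 (L.1-1) h₁ q₁ hnc₁ B₁ B₂ hB₁'' hB₂'' hne a b c d ha hb hc hd o₁ o₂ o₃
            · have hcc := hreg1 q₁ B₁ hB₁'' c hc
              have hbb := hreg2 q₂ B₂ hB₂'' b hb
              omega
        · rcases Finset.mem_insert.1 hB₂ with rfl | hB₂'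
          · have haa := hreg2 q₂ B₁ hB₁'' a ha
            rcases pair_mem_val L b hb with h | h <;> rcases pair_mem_val L d hd with h' | h' <;> omega
          · rcases Finset.mem_union.1 hB₂' with hB₂'' | hB₂''
            · have haa := hreg2 q₂ B₁ hB₁'' a ha
              have hbb := hreg1 q₁ B₂ hB₂'' b hb
              omega
            · exact mapP_nocross (L.1+1) (n-L.1) h₂ q₂ hnc₂ B₁ B₂ hB₁'' hB₂'' hne a b c d ha hb hc hd o₁ o₂ o₃
  -- Ψ lands in the product
  have hΨmem : ∀ γ ∈ (NCPP (n+1)).filter (fun γ => {0, L} ∈ γ),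
      Ψ γ ∈ NCPP (L.1-1) ×ˢ NCPP (n-L.1) := by
    intro γ hγ
    obtain ⟨hγ', h0γ⟩ := Finset.mem_filter.1 hγ
    refine Finset.mem_product.2 ⟨?_, ?_⟩
    · refine pullP_mem_NCPP 1 (L.1-1) h₁ γ hγ' ?_
      intro B hB x hx hx1 hx2
      rcases classify L hL γ hγ' h0γ B hB with rfl | hr | hr
      · exfalso; rcases pair_mem_val L x hx with h | h <;> omega
      · exact hr
      · exfalso; have := (hr x hx).1; omega
    · refine pullP_mem_NCPP (L.1+1) (n-L.1) h₂ γ hγ' ?_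
      intro B hB x hx hx1 hx2
      rcases classify L hL γ hγ' h0γ B hB with rfl | hr | hr
      · exfalso; rcases pair_mem_val L x hx with h | h <;> omega
      · exfalso; have := hr x hx; omega
      · exact hr
  -- left inverse
  have hLI : ∀ q ∈ NCPP (L.1-1) ×ˢ NCPP (n-L.1), Ψ (Φ q) = q := by
    rintro ⟨q₁, q₂⟩ hq
    rw [Finset.mem_product] at hq
    obtain ⟨hq₁, hq₂⟩ := hq
    obtain ⟨⟨hpart₁, hnc₁⟩, hcard₁⟩ := (mem_NCPP q₁).1 hq₁
    obtain ⟨⟨hpart₂, hnc₂⟩, hcard₂⟩ := (mem_NCPP q₂).1 hq₂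
    have hfil1 : (Φ (q₁, q₂)).filter (regP 1 (L.1-1)) = mapP 1 (L.1-1) h₁ q₁ := by
      ext B
      rw [Finset.mem_filter]
      constructor
      · rintro ⟨hB, hBreg⟩
        rcases Finset.mem_insert.1 hB with rfl | hB'
        · exfalso
          have := hBreg 0 (Finset.mem_insert_self _ _)
          simp at this
        · rcases Finset.mem_union.1 hB' with hB'' | hB''
          · exact hB''
          · exfalso
            have hcB : B.card = 2 := mapP_card _ _ _ _ hcard₂ _ hB''
            obtain ⟨x, hx⟩ := Finset.card_pos.1 (by rw [hcB]; norm_num)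
            have := hreg2 q₂ B hB'' x hx
            have := hBreg x hx
            omega
      · intro hB
        refine ⟨Finset.mem_insert_of_mem (Finset.mem_union_left _ hB), ?_⟩
        exact mapP_regP 1 (L.1-1) h₁ q₁ B hB
    have hfil2 : (Φ (q₁, q₂)).filter (regP (L.1+1) (n-L.1)) = mapP (L.1+1) (n-L.1) h₂ q₂ := by
      ext B
      rw [Finset.mem_filter]
      constructor
      · rintro ⟨hB, hBreg⟩
        rcases Finset.mem_insert.1 hB with rfl | hB'
        · exfalso
          have := hBreg 0 (Finset.mem_insert_self _ _)
          simp at this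
        · rcases Finset.mem_union.1 hB' with hB'' | hB''
          · exfalso
            have hcB : B.card = 2 := mapP_card _ _ _ _ hcard₁ _ hB''
            obtain ⟨x, hx⟩ := Finset.card_pos.1 (by rw [hcB]; norm_num)
            have := hreg1 q₁ B hB'' x hx
            have := (hBreg x hx).1
            omega
          · exact hB''
      · intro hB
        refine ⟨Finset.mem_insert_of_mem (Finset.mem_union_right _ hB), ?_⟩
        exact mapP_regP (L.1+1) (n-L.1) h₂ q₂ B hB
    have e1 : pullP 1 (L.1-1) h₁ (Φ (q₁, q₂)) = q₁ := by
      unfold pullP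
      rw [hfil1]
      exact image_pre_mapP 1 (L.1-1) h₁ q₁
    have e2 : pullP (L.1+1) (n-L.1) h₂ (Φ (q₁, q₂)) = q₂ := by
      unfold pullP
      rw [hfil2]
      exact image_pre_mapP (L.1+1) (n-L.1) h₂ q₂
    show (pullP 1 (L.1-1) h₁ (Φ (q₁, q₂)), pullP (L.1+1) (n-L.1) h₂ (Φ (q₁, q₂))) = (q₁, q₂)
    rw [e1, e2]
  -- right inverse
  have hRI : ∀ γ ∈ (NCPP (n+1)).filter (fun γ => {0, L} ∈ γ), Φ (Ψ γ) = γ := by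
    intro γ hγ
    obtain ⟨hγ', h0γ⟩ := Finset.mem_filter.1 hγ
    show insert {0, L} (mapP 1 (L.1-1) h₁ (pullP 1 (L.1-1) h₁ γ)
        ∪ mapP (L.1+1) (n-L.1) h₂ (pullP (L.1+1) (n-L.1) h₂ γ)) = γ
    rw [mapP_pullP, mapP_pullP]
    ext B
    constructor
    · intro hB
      rcases Finset.mem_insert.1 hB with rfl | hB'
      · exact h0γ
      · rcases Finset.mem_union.1 hB' with hB'' | hB'' <;> exact Finset.mem_of_mem_filter _ hB''
    · intro hB
      rcases classify L hL γ hγ' h0γ B hB with rfl | hr | hr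
      · exact Finset.mem_insert_self _ _
      · exact Finset.mem_insert_of_mem (Finset.mem_union_left _ (Finset.mem_filter.2 ⟨hB, hr⟩))
      · exact Finset.mem_insert_of_mem (Finset.mem_union_right _ (Finset.mem_filter.2 ⟨hB, hr⟩))
  -- the value of pairProd on Φ q
  have hval : ∀ q ∈ NCPP (L.1-1) ×ˢ NCPP (n-L.1),
      g 0 L.1 * (pairProd (fun s t => g (1 + s.1) (1 + t.1)) q.1
        * pairProd (fun s t => g (L.1 + 1 + s.1) (L.1 + 1 + t.1)) q.2)
      = pairProd (fun s t => g s.1 t.1) (Φ q) := by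
    rintro ⟨q₁, q₂⟩ hq
    rw [Finset.mem_product] at hq
    obtain ⟨hq₁, hq₂⟩ := hq
    obtain ⟨⟨hpart₁, hnc₁⟩, hcard₁⟩ := (mem_NCPP q₁).1 hq₁
    obtain ⟨⟨hpart₂, hnc₂⟩, hcard₂⟩ := (mem_NCPP q₂).1 hq₂
    have hnotin : ({0, L} : Finset (Fin (n+1))) ∉
        mapP 1 (L.1-1) h₁ q₁ ∪ mapP (L.1+1) (n-L.1) h₂ q₂ := by
      intro hmem
      rcases Finset.mem_union.1 hmem with hmem' | hmem'
      · have := hreg1 q₁ _ hmem' 0 (Finset.mem_insert_self _ _); simp at this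
      · have := hreg2 q₂ _ hmem' 0 (Finset.mem_insert_self _ _); simp at this
    have hdisj : Disjoint (mapP 1 (L.1-1) h₁ q₁) (mapP (L.1+1) (n-L.1) h₂ q₂) := by
      rw [Finset.disjoint_left]
      intro B hB hB'
      have hcB : B.card = 2 := mapP_card _ _ _ _ hcard₁ _ hB
      obtain ⟨x, hx⟩ := Finset.card_pos.1 (by rw [hcB]; norm_num)
      have := hreg1 q₁ B hB x hx
      have := hreg2 q₂ B hB' x hx
      omega
    show _ = ∏ B ∈ insert {0, L} (mapP 1 (L.1-1) h₁ q₁ ∪ mapP (L.1+1) (n-L.1) h₂ q₂),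
      (if h : B.Nonempty then g (B.min' h).1 (B.max' h).1 else 1)
    rw [Finset.prod_insert hnotin, Finset.prod_union hdisj]
    have hpairne : ({0, L} : Finset (Fin (n+1))).Nonempty := ⟨0, Finset.mem_insert_self _ _⟩
    rw [dif_pos hpairne]
    have hmin : ({0, L} : Finset (Fin (n+1))).min' hpairne = 0 := by
      apply le_antisymm
      · exact Finset.min'_le _ _ (Finset.mem_insert_self _ _)
      · exact Fin.zero_le _
    have hmax : ({0, L} : Finset (Fin (n+1))).max' hpairne = L := by
      apply le_antisymm
      · apply Finset.max'_le
        intro y hy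
        rcases pair_mem_val_gen y 0 L hy with h | h
        · rw [h]; exact Fin.zero_le _
        · rw [h]
      · exact Finset.le_max' _ _ (Finset.mem_insert_of_mem (Finset.mem_singleton_self _))
    rw [hmin, hmax]
    have i1 : (∏ B ∈ mapP 1 (L.1-1) h₁ q₁,
        if h : B.Nonempty then g (B.min' h).1 (B.max' h).1 else 1)
        = pairProd (fun s t => g (1 + s.1) (1 + t.1)) q₁ :=
      pairProd_mapP 1 (L.1-1) h₁ q₁ (fun s t => g s.1 t.1)
    have i2 : (∏ B ∈ mapP (L.1+1) (n-L.1) h₂ q₂,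
        if h : B.Nonempty then g (B.min' h).1 (B.max' h).1 else 1)
        = pairProd (fun s t => g (L.1 + 1 + s.1) (L.1 + 1 + t.1)) q₂ :=
      pairProd_mapP (L.1+1) (n-L.1) h₂ q₂ (fun s t => g s.1 t.1)
    rw [i1, i2]
    rfl
  -- conclude
  rw [Finset.sum_mul_sum]
  rw [Finset.mul_sum]
  simp only [Finset.mul_sum]
  rw [← Finset.sum_product']
  exact (Finset.sum_nbij' Φ Ψ hΦmem hΨmem hLI hRI hval).symm

lemma zero_block {n : ℕ} (γ : Finset (Finset (Fin (n+1)))) (hγ : γ ∈ NCPP (n+1)) :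
    ∃ L : Fin (n+1), L ≠ 0 ∧ {0, L} ∈ γ ∧ ∀ L' : Fin (n+1), {0, L'} ∈ γ → L' = L := by
  obtain ⟨⟨⟨hne, huniq⟩, hnc⟩, hcard⟩ := (mem_NCPP γ).1 hγ
  obtain ⟨B, ⟨hB, h0B⟩, hBu⟩ := huniq 0
  obtain ⟨x, y, hxy, hBxy⟩ := Finset.card_eq_two.1 (hcard B hB)
  have key : ∃ L : Fin (n+1), L ≠ 0 ∧ B = {0, L} := by
    rw [hBxy] at h0B
    rcases pair_mem_val_gen 0 x y h0B with h | h
    · exact ⟨y, fun hc => hxy (by rw [← h, hc]), by rw [hBxy, ← h]⟩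
    · exact ⟨x, fun hc => hxy (by rw [← h, hc]), by rw [hBxy, ← h, Finset.pair_comm]⟩
  obtain ⟨L, hL0, hBL⟩ := key
  refine ⟨L, hL0, by rw [← hBL]; exact hB, ?_⟩
  intro L' hL'
  have : ({0, L'} : Finset (Fin (n+1))) = B := hBu _ ⟨hL', Finset.mem_insert_self _ _⟩
  rw [hBL] at this
  have hmem : L' ∈ ({0, L} : Finset (Fin (n+1))) := by
    rw [← this]; exact Finset.mem_insert_of_mem (Finset.mem_singleton_self _)
  rcases pair_mem_val_gen L' 0 L hmem with h | h
  · exfalso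
    rw [h] at this
    have hLmem : L ∈ ({0, (0 : Fin (n+1))} : Finset (Fin (n+1))) := by
      rw [this]; exact Finset.mem_insert_of_mem (Finset.mem_singleton_self _)
    rcases pair_mem_val_gen L 0 0 hLmem with h' | h' <;> exact hL0 h'
  · exact h

lemma NCPP_split (n : ℕ) (g : ℕ → ℕ → ℂ) :
    ∑ γ ∈ NCPP (n+1), pairProd (fun s t => g s.1 t.1) γ
      = ∑ l ∈ Finset.Ico 1 (n+1),
          g 0 l * ((∑ γ ∈ NCPP (l - 1), pairProd (fun s t => g (1 + s.1) (1 + t.1)) γ)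
            * ∑ γ ∈ NCPP (n - l), pairProd (fun s t => g (l + 1 + s.1) (l + 1 + t.1)) γ) := by
  classical
  set P : Finset (Finset (Fin (n+1))) → ℂ := pairProd (fun s t => g s.1 t.1) with hP
  set body : ℕ → ℂ := fun l =>
    g 0 l * ((∑ γ ∈ NCPP (l - 1), pairProd (fun s t => g (1 + s.1) (1 + t.1)) γ)
      * ∑ γ ∈ NCPP (n - l), pairProd (fun s t => g (l + 1 + s.1) (l + 1 + t.1)) γ) with hbody
  have step1 : ∑ γ ∈ NCPP (n+1), P γ
      = ∑ L : Fin (n+1), ∑ γ ∈ (NCPP (n+1)).filter (fun γ => {0, L} ∈ γ), P γ := by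
    have : ∀ γ ∈ NCPP (n+1), P γ = ∑ L : Fin (n+1), if {0, L} ∈ γ then P γ else 0 := by
      intro γ hγ
      obtain ⟨L₀, hL₀ne, hL₀mem, hL₀uniq⟩ := zero_block γ hγ
      rw [Finset.sum_eq_single_of_mem L₀ (Finset.mem_univ _)]
      · rw [if_pos hL₀mem]
      · intro L' _ hne
        rw [if_neg]
        intro hmem
        exact hne (hL₀uniq L' hmem)
    rw [Finset.sum_congr rfl this, Finset.sum_comm]
    refine Finset.sum_congr rfl fun L _ => ?_
    rw [Finset.sum_filter]
  have step2 : ∀ L : Fin (n+1),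
      (∑ γ ∈ (NCPP (n+1)).filter (fun γ => {0, L} ∈ γ), P γ) = if L.1 = 0 then 0 else body L.1 := by
    intro L
    by_cases hL : L = 0
    · subst hL
      rw [if_pos (show ((0 : Fin (n+1)) : ℕ) = 0 by simp)]
      convert Finset.sum_empty
      rw [Finset.filter_eq_empty_iff]
      intro γ hγ hmem
      obtain ⟨-, hcard⟩ := (mem_NCPP γ).1 hγ
      have : ({0, (0 : Fin (n+1))} : Finset (Fin (n+1))).card = 2 := hcard _ hmem
      simp at this
    · have hLv : ¬ (L.1 = (0 : ℕ)) := fun h => hL (Fin.ext (h.trans (Fin.val_zero _).symm))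
      rw [if_neg hLv]
      exact stepB L hL g
  rw [step1, Finset.sum_congr rfl (fun L _ => step2 L)]
  rw [Fin.sum_univ_eq_sum_range (fun l => if l = 0 then 0 else body l) (n+1)]
  have : ∀ l ∈ Finset.range (n+1), (if l = 0 then (0 : ℂ) else body l)
      = if 1 ≤ l then body l else 0 := by
    intro l _
    by_cases h : l = 0
    · subst h; simp
    · rw [if_neg h, if_pos (by omega)]
  rw [Finset.sum_congr rfl this, ← Finset.sum_filter]
  congr 1
  ext l
  simp only [Finset.mem_filter, Finset.mem_range, Finset.mem_Ico]
  omega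

lemma sum_triangle {β : Type*} [AddCommMonoid β] (a c : ℕ) (T : ℕ → ℕ → β) :
    ∑ l ∈ Finset.Ico a c, ∑ m ∈ Finset.Ico (l+1) c, T l m
      = ∑ m ∈ Finset.Ico a c, ∑ l ∈ Finset.Ico a m, T l m := by
  have h1 : ∀ l ∈ Finset.Ico a c, (∑ m ∈ Finset.Ico (l+1) c, T l m)
      = ∑ m ∈ Finset.Ico a c, if l < m then T l m else 0 := by
    intro l hl
    rw [Finset.mem_Ico] at hl
    rw [← Finset.sum_filter]
    congr 1
    ext m
    simp only [Finset.mem_filter, Finset.mem_Ico]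
    omega
  have h2 : ∀ m ∈ Finset.Ico a c, (∑ l ∈ Finset.Ico a m, T l m)
      = ∑ l ∈ Finset.Ico a c, if l < m then T l m else 0 := by
    intro m hm
    rw [Finset.mem_Ico] at hm
    rw [← Finset.sum_filter]
    congr 1
    ext l
    simp only [Finset.mem_filter, Finset.mem_Ico]
    omega
  rw [Finset.sum_congr rfl h1, Finset.sum_congr rfl h2, Finset.sum_comm]

section Analysis
set_option linter.unusedSectionVars false

variable {H E : Type*} [NormedAddCommGroup H] [InnerProductSpace ℂ H]
  [NormedAddCommGroup E] [InnerProductSpace ℂ E] [CompleteSpace E]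

noncomputable def prodG (G₀ : H → E →L[ℂ] E) (Ff : ℕ → H) (i j : ℕ) : E →L[ℂ] E :=
  ((List.range' i (j - i)).map (fun k => G₀ (Ff k))).prod

noncomputable def Vv (Ω : E) (G₀ : H → E →L[ℂ] E) (Ff : ℕ → H) (i j : ℕ) : E :=
  prodG G₀ Ff i j Ω

noncomputable def Mm (Ω : E) (G₀ : H → E →L[ℂ] E) (Ff : ℕ → H) (i j : ℕ) : ℂ :=
  inner ℂ Ω (Vv Ω G₀ Ff i j)

lemma prodG_stop (G₀ : H → E →L[ℂ] E) (Ff : ℕ → H) {i j : ℕ} (h : j ≤ i) :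
    prodG G₀ Ff i j = 1 := by
  unfold prodG
  rw [Nat.sub_eq_zero_of_le h]
  simp

lemma prodG_step (G₀ : H → E →L[ℂ] E) (Ff : ℕ → H) {i j : ℕ} (h : i < j) :
    prodG G₀ Ff i j = G₀ (Ff i) * prodG G₀ Ff (i+1) j := by
  unfold prodG
  have e : j - i = (j - (i+1)) + 1 := by omega
  rw [e, List.range'_succ]
  simp

lemma Vv_stop (Ω : E) (G₀ : H → E →L[ℂ] E) (Ff : ℕ → H) {i j : ℕ} (h : j ≤ i) :
    Vv Ω G₀ Ff i j = Ω := by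
  unfold Vv
  rw [prodG_stop G₀ Ff h, ContinuousLinearMap.one_apply]

lemma Vv_step (Ω : E) (G₀ : H → E →L[ℂ] E) (Ff : ℕ → H) {i j : ℕ} (h : i < j) :
    Vv Ω G₀ Ff i j = G₀ (Ff i) (Vv Ω G₀ Ff (i+1) j) := by
  unfold Vv
  rw [prodG_step G₀ Ff h, ContinuousLinearMap.mul_apply]

lemma Mm_stop (Ω : E) (hΩ : ‖Ω‖ = 1) (G₀ : H → E →L[ℂ] E) (Ff : ℕ → H) {i j : ℕ} (h : j ≤ i) :
    Mm Ω G₀ Ff i j = 1 := by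
  unfold Mm
  rw [Vv_stop Ω G₀ Ff h, inner_self_eq_norm_sq_to_K, hΩ]
  norm_num

lemma lemA (Ω : E) (hΩ : ‖Ω‖ = 1) (ann : H → E →L[ℂ] E) (hvac : ∀ f, ann f Ω = 0)
    (hrel : ∀ f g : H, (ann f).comp (ContinuousLinearMap.adjoint (ann g))
      = (inner ℂ f g : ℂ) • (1 : E →L[ℂ] E))
    (G₀ : H → E →L[ℂ] E) (hG : ∀ f, G₀ f = ann f + ContinuousLinearMap.adjoint (ann f))
    (Ff : ℕ → H) :
    ∀ (N i j : ℕ), j - i ≤ N → ∀ g : H,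
      ann g (Vv Ω G₀ Ff i j) = ∑ l ∈ Finset.Ico i j, (inner ℂ g (Ff l) : ℂ) •
        ((Mm Ω G₀ Ff i l) • Vv Ω G₀ Ff (l+1) j) := by
  have annrel : ∀ (f g : H) (v : E), ann f ((ContinuousLinearMap.adjoint (ann g)) v)
      = (inner ℂ f g : ℂ) • v := by
    intro f g v
    have := ContinuousLinearMap.ext_iff.1 (hrel f g) v
    rwa [ContinuousLinearMap.comp_apply, ContinuousLinearMap.smul_apply,
      ContinuousLinearMap.one_apply] at this
  have adj0 : ∀ (g : H) (v : E), (inner ℂ Ω ((ContinuousLinearMap.adjoint (ann g)) v) : ℂ) = 0 := by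
    intro g v
    rw [ContinuousLinearMap.adjoint_inner_right, hvac, inner_zero_left]
  have hbase : ∀ (i j : ℕ), j ≤ i → ∀ g : H,
      ann g (Vv Ω G₀ Ff i j) = ∑ l ∈ Finset.Ico i j, (inner ℂ g (Ff l) : ℂ) •
        ((Mm Ω G₀ Ff i l) • Vv Ω G₀ Ff (l+1) j) := by
    intro i j hij g
    rw [Vv_stop Ω G₀ Ff hij, hvac, Finset.Ico_eq_empty (by omega), Finset.sum_empty]
  intro N
  induction N with
  | zero =>
    intro i j hij g
    exact hbase i j (by omega) g
  | succ N ih =>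
    intro i j hij g
    by_cases hij' : i < j
    · -- the inductive M-recursion
      have hM : ∀ m, i < m → m ≤ j → Mm Ω G₀ Ff i m
          = ∑ k ∈ Finset.Ico (i+1) m, (inner ℂ (Ff i) (Ff k) : ℂ)
              * (Mm Ω G₀ Ff (i+1) k * Mm Ω G₀ Ff (k+1) m) := by
        intro m him hmj
        have hVm : Vv Ω G₀ Ff i m = ann (Ff i) (Vv Ω G₀ Ff (i+1) m)
            + (ContinuousLinearMap.adjoint (ann (Ff i))) (Vv Ω G₀ Ff (i+1) m) := by
          rw [Vv_step Ω G₀ Ff him, hG (Ff i), ContinuousLinearMap.add_apply]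
        show (inner ℂ Ω (Vv Ω G₀ Ff i m) : ℂ) = _
        rw [hVm, inner_add_right, adj0, add_zero]
        rw [ih (i+1) m (by omega) (Ff i), inner_sum]
        refine Finset.sum_congr rfl fun k hk => ?_
        rw [inner_smul_right, inner_smul_right]
        rfl
      set X := Vv Ω G₀ Ff (i+1) j with hX
      have step1 : Vv Ω G₀ Ff i j = ann (Ff i) X + (ContinuousLinearMap.adjoint (ann (Ff i))) X := by
        rw [Vv_step Ω G₀ Ff hij', hG (Ff i), ContinuousLinearMap.add_apply]
      have hT1 : ann g (ann (Ff i) X) = ∑ m ∈ Finset.Ico (i+1) j, (inner ℂ g (Ff m) : ℂ) •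
          ((Mm Ω G₀ Ff i m) • Vv Ω G₀ Ff (m+1) j) := by
        rw [hX, ih (i+1) j (by omega) (Ff i), map_sum]
        have e1 : ∀ l ∈ Finset.Ico (i+1) j,
            ann g ((inner ℂ (Ff i) (Ff l) : ℂ) • ((Mm Ω G₀ Ff (i+1) l) • Vv Ω G₀ Ff (l+1) j))
            = ∑ m ∈ Finset.Ico (l+1) j, ((inner ℂ g (Ff m) : ℂ)
                * ((inner ℂ (Ff i) (Ff l) : ℂ) * (Mm Ω G₀ Ff (i+1) l * Mm Ω G₀ Ff (l+1) m)))
                  • Vv Ω G₀ Ff (m+1) j := by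
          intro l hl
          rw [Finset.mem_Ico] at hl
          rw [map_smul, map_smul, ih (l+1) j (by omega) g, Finset.smul_sum, Finset.smul_sum]
          refine Finset.sum_congr rfl fun m hm => ?_
          simp only [smul_smul]
          congr 1
          ring
        rw [Finset.sum_congr rfl e1]
        rw [sum_triangle (i+1) j (fun l m => ((inner ℂ g (Ff m) : ℂ)
          * ((inner ℂ (Ff i) (Ff l) : ℂ) * (Mm Ω G₀ Ff (i+1) l * Mm Ω G₀ Ff (l+1) m)))
            • Vv Ω G₀ Ff (m+1) j)]
        refine Finset.sum_congr rfl fun m hm => ?_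
        rw [Finset.mem_Ico] at hm
        rw [hM m (by omega) (by omega), smul_smul, Finset.mul_sum, Finset.sum_smul]
      rw [Finset.sum_eq_sum_Ico_succ_bot hij', Mm_stop Ω hΩ G₀ Ff (le_refl i), one_smul]
      rw [step1, map_add, annrel g (Ff i) X, hT1]
      rw [add_comm]
    · exact hbase i j (by omega) g

lemma Mrec (Ω : E) (hΩ : ‖Ω‖ = 1) (ann : H → E →L[ℂ] E) (hvac : ∀ f, ann f Ω = 0)
    (hrel : ∀ f g : H, (ann f).comp (ContinuousLinearMap.adjoint (ann g))
      = (inner ℂ f g : ℂ) • (1 : E →L[ℂ] E))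
    (G₀ : H → E →L[ℂ] E) (hG : ∀ f, G₀ f = ann f + ContinuousLinearMap.adjoint (ann f))
    (Ff : ℕ → H) (i j : ℕ) (hij : i < j) :
    Mm Ω G₀ Ff i j = ∑ l ∈ Finset.Ico (i+1) j, (inner ℂ (Ff i) (Ff l) : ℂ)
      * (Mm Ω G₀ Ff (i+1) l * Mm Ω G₀ Ff (l+1) j) := by
  have adj0 : ∀ (g : H) (v : E), (inner ℂ Ω ((ContinuousLinearMap.adjoint (ann g)) v) : ℂ) = 0 := by
    intro g v
    rw [ContinuousLinearMap.adjoint_inner_right, hvac, inner_zero_left]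
  have hVm : Vv Ω G₀ Ff i j = ann (Ff i) (Vv Ω G₀ Ff (i+1) j)
      + (ContinuousLinearMap.adjoint (ann (Ff i))) (Vv Ω G₀ Ff (i+1) j) := by
    rw [Vv_step Ω G₀ Ff hij, hG (Ff i), ContinuousLinearMap.add_apply]
  show (inner ℂ Ω (Vv Ω G₀ Ff i j) : ℂ) = _
  rw [hVm, inner_add_right, adj0, add_zero]
  rw [lemA Ω hΩ ann hvac hrel G₀ hG Ff (j - (i+1)) (i+1) j (le_refl _) (Ff i), inner_sum]
  refine Finset.sum_congr rfl fun k hk => ?_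
  rw [inner_smul_right, inner_smul_right]
  rfl

end Analysis

section Analysis2
set_option linter.unusedSectionVars false

variable {H E : Type*} [NormedAddCommGroup H] [InnerProductSpace ℂ H]
  [NormedAddCommGroup E] [InnerProductSpace ℂ E] [CompleteSpace E]

lemma Modd (Ω : E) (hΩ : ‖Ω‖ = 1) (ann : H → E →L[ℂ] E) (hvac : ∀ f, ann f Ω = 0)
    (hrel : ∀ f g : H, (ann f).comp (ContinuousLinearMap.adjoint (ann g))
      = (inner ℂ f g : ℂ) • (1 : E →L[ℂ] E))
    (G₀ : H → E →L[ℂ] E) (hG : ∀ f, G₀ f = ann f + ContinuousLinearMap.adjoint (ann f))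
    (Ff : ℕ → H) :
    ∀ (N i j : ℕ), j - i ≤ N → Odd (j - i) → Mm Ω G₀ Ff i j = 0 := by
  intro N
  induction N with
  | zero =>
    intro i j h1 h2
    rw [Nat.odd_iff] at h2
    omega
  | succ N ih =>
    intro i j h1 h2
    rw [Nat.odd_iff] at h2
    have hij : i < j := by omega
    rw [Mrec Ω hΩ ann hvac hrel G₀ hG Ff i j hij]
    refine Finset.sum_eq_zero fun l hl => ?_
    rw [Finset.mem_Ico] at hl
    rcases Nat.even_or_odd (l - (i+1)) with he | ho
    · rw [Nat.even_iff] at he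
      have h3 : Odd (j - (l+1)) := by rw [Nat.odd_iff]; omega
      rw [ih (l+1) j (by omega) h3, mul_zero, mul_zero]
    · rw [Nat.odd_iff] at ho
      rw [ih (i+1) l (by omega) (by rw [Nat.odd_iff]; omega), zero_mul, mul_zero]

lemma MW (Ω : E) (hΩ : ‖Ω‖ = 1) (ann : H → E →L[ℂ] E) (hvac : ∀ f, ann f Ω = 0)
    (hrel : ∀ f g : H, (ann f).comp (ContinuousLinearMap.adjoint (ann g))
      = (inner ℂ f g : ℂ) • (1 : E →L[ℂ] E))
    (G₀ : H → E →L[ℂ] E) (hG : ∀ f, G₀ f = ann f + ContinuousLinearMap.adjoint (ann f))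
    (Ff : ℕ → H) :
    ∀ (N n i : ℕ), n ≤ N → Mm Ω G₀ Ff i (i + n)
      = ∑ γ ∈ NCPP n, pairProd (fun s t => (inner ℂ (Ff (i + s.1)) (Ff (i + t.1)) : ℂ)) γ := by
  have hb : ∀ i : ℕ, Mm Ω G₀ Ff i (i + 0)
      = ∑ γ ∈ NCPP 0, pairProd (fun s t => (inner ℂ (Ff (i + s.1)) (Ff (i + t.1)) : ℂ)) γ := by
    intro i
    rw [NCPP_zero, Finset.sum_singleton, pairProd_empty]
    exact Mm_stop Ω hΩ G₀ Ff (le_refl i)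
  intro N
  induction N with
  | zero =>
    intro n i hn
    have : n = 0 := by omega
    subst this
    exact hb i
  | succ N ih =>
    intro n i hn
    match n with
    | 0 => exact hb i
    | Nat.succ n' =>
      rw [Mrec Ω hΩ ann hvac hrel G₀ hG Ff i (i + (n'+1)) (by omega)]
      rw [NCPP_split n' (fun s t => (inner ℂ (Ff (i + s)) (Ff (i + t)) : ℂ))]
      refine Finset.sum_nbij' (fun l => l - i) (fun k => i + k) ?_ ?_ ?_ ?_ ?_
      · intro l hl
        rw [Finset.mem_Ico] at hl ⊢
        omega
      · intro k hk
        rw [Finset.mem_Ico] at hk ⊢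
        omega
      · intro l hl
        rw [Finset.mem_Ico] at hl
        omega
      · intro k hk
        rw [Finset.mem_Ico] at hk
        omega
      · intro l hl
        rw [Finset.mem_Ico] at hl
        have hA : (inner ℂ (Ff i) (Ff l) : ℂ) = inner ℂ (Ff (i + 0)) (Ff (i + (l - i))) := by
          rw [Nat.add_zero]
          congr 2
          omega
        have hB : Mm Ω G₀ Ff (i+1) l
            = ∑ γ ∈ NCPP (l - i - 1),
                pairProd (fun s t => (inner ℂ (Ff (i + (1 + s.1))) (Ff (i + (1 + t.1))) : ℂ)) γ := by
          have h0 := ih (l - i - 1) (i+1) (by omega)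
          have e1 : (i+1) + (l - i - 1) = l := by omega
          rw [e1] at h0
          rw [h0]
          refine Finset.sum_congr rfl fun γ _ => ?_
          congr 1
          funext s t
          have a1 : i + (1 + s.1) = (i+1) + s.1 := by omega
          have a2 : i + (1 + t.1) = (i+1) + t.1 := by omega
          rw [a1, a2]
        have hC : Mm Ω G₀ Ff (l+1) (i + (n'+1))
            = ∑ γ ∈ NCPP (n' - (l - i)),
                pairProd (fun s t =>
                  (inner ℂ (Ff (i + (l - i + 1 + s.1))) (Ff (i + (l - i + 1 + t.1))) : ℂ)) γ := by
          have h0 := ih (n' - (l - i)) (l+1) (by omega)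
          have e1 : (l+1) + (n' - (l - i)) = i + (n'+1) := by omega
          rw [e1] at h0
          rw [h0]
          refine Finset.sum_congr rfl fun γ _ => ?_
          congr 1
          funext s t
          have a1 : i + (l - i + 1 + s.1) = (l+1) + s.1 := by omega
          have a2 : i + (l - i + 1 + t.1) = (l+1) + t.1 := by omega
          rw [a1, a2]
        rw [hA, hB, hC]

end Analysis2

end Comb

/-- Wick formula on the full Fock space (presented abstractly by the relations
`a(f)Ω = 0`, `a(f)a*(g) = ⟨f,g⟩·1`): the vacuum moments of `G₀(f) = a(f) + a*(f)` are
`τ(G₀(f₁)⋯G₀(f_p)) = Σ_{γ ∈ NCPP(p)} Π_{(k,l) ∈ γ} ⟨f_k, f_l⟩`; in particular they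
vanish for `p` odd. -/
theorem stmt11 {H F : Type*} [NormedAddCommGroup H] [InnerProductSpace ℂ H]
    [NormedAddCommGroup F] [InnerProductSpace ℂ F] [CompleteSpace F]
    (Ω : F) (hΩ : ‖Ω‖ = 1)
    (ann : H → F →L[ℂ] F)
    (hvac : ∀ f, ann f Ω = 0)
    (hrel : ∀ f g : H, (ann f).comp (ContinuousLinearMap.adjoint (ann g))
        = (inner ℂ f g : ℂ) • (1 : F →L[ℂ] F))
    (G₀ : H → F →L[ℂ] F)
    (hG : ∀ f, G₀ f = ann f + ContinuousLinearMap.adjoint (ann f)) :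
    ∀ (p : ℕ) (f : Fin p → H),
      (inner ℂ Ω (((List.ofFn fun i => G₀ (f i)).prod) Ω) : ℂ)
          = ∑ γ ∈ NCPP p, pairProd (fun s t => (inner ℂ (f s) (f t) : ℂ)) γ
        ∧ (Odd p → (inner ℂ Ω (((List.ofFn fun i => G₀ (f i)).prod) Ω) : ℂ) = 0) := by
  intro p f
  set Ff : ℕ → H := fun k => if h : k < p then f ⟨k, h⟩ else 0 with hFf
  have hlist : (List.ofFn fun i => G₀ (f i)) = (List.range' 0 (p - 0)).map (fun k => G₀ (Ff k)) := by
    rw [Nat.sub_zero, ← List.range_eq_range', ← List.map_coe_finRange_eq_range, List.map_map,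
      List.ofFn_eq_map]
    refine List.map_congr_left fun a _ => ?_
    simp only [Function.comp_apply]
    congr 1
    simp only [hFf]
    rw [dif_pos a.isLt]
  have hMm : (inner ℂ Ω (((List.ofFn fun i => G₀ (f i)).prod) Ω) : ℂ) = Mm Ω G₀ Ff 0 p := by
    rw [hlist]; rfl
  have hfun : ∀ γ ∈ NCPP p,
      pairProd (fun s t => (inner ℂ (Ff (0 + s.1)) (Ff (0 + t.1)) : ℂ)) γ
        = pairProd (fun s t => (inner ℂ (f s) (f t) : ℂ)) γ := by
    intro γ _
    congr 1
    funext s t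
    rw [Nat.zero_add, Nat.zero_add]
    simp only [hFf]
    rw [dif_pos s.isLt, dif_pos t.isLt]
  constructor
  · rw [hMm]
    have h0 := MW Ω hΩ ann hvac hrel G₀ hG Ff p p 0 (le_refl p)
    rw [Nat.zero_add] at h0
    rw [h0]
    exact Finset.sum_congr rfl hfun
  · intro hodd
    rw [hMm]
    exact Modd Ω hΩ ann hvac hrel G₀ hG Ff p 0 p (by omega) (by rwa [Nat.sub_zero])
end
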